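/- arXiv:1211.2507 — 2 statements merged into one kernel-verified Lean document; each statement's English description precedes it below -/
import Mathlib

section
/- Let y = (y_1,...,y_n) be uniformly distributed on the unit sphere S^{n-1} in R^n, with n ≥ 4. For indices i, j, k, l mutually distinct, |E[(y_i^2 - 1/n)(y_j^2 - 1/n)(y_k^2 - 1/n)(y_l^2 - 1/n)]| ≤ C n^{-6} for an absolute constant C. -/
open MeasureTheory ProbabilityTheory

/-- The standard Gaussian measure on `Fin n → ℝ`. -/
noncomputable def stdGaussian (n : ℕ) : Measure (Fin n → ℝ) :=
  Measure.pi fun _ => gaussianReal 0 1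

/-- The uniform (rotation-invariant) probability measure on the unit sphere `S^{n-1} ⊆ ℝ^n`,
realized as the law of `g / ‖g‖` for a standard Gaussian vector `g`. -/
noncomputable def sphereUniform (n : ℕ) : Measure (Fin n → ℝ) :=
  (stdGaussian n).map (fun g i => g i / Real.sqrt (∑ j, g j ^ 2))

/-!
Write `X_t = y_t² - 1/n`. The vector `X` is exchangeable and `∑ X_t = 0`, so multiplying by
`X_a X_b X_c` and summing over the fourth index gives, for distinct indices,
`E[X_a² X_b X_c] + E[X_a X_b² X_c] + E[X_a X_b X_c²] + (n - 3) E[X_a X_b X_c X_d] = 0` and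
`E[X_a³ X_b] + E[X_a² X_b²] + (n - 2) E[X_a² X_b X_c] = 0`.
Bounding every moment with a repeated index by `q = max_t E[X_t⁴]` (AM-GM) yields
`(n - 2)(n - 3) |E[X_a X_b X_c X_d]| ≤ 6 q`.

It remains to see `q = O(n⁻⁴)`, i.e. `E[y_t⁸] = O(n⁻⁴)`. With `y = g / |g|` for a standard
Gaussian `g`, `|g|⁸ y_t⁸ = g_t⁸` has bounded mean, while `|g|² ≤ n / 4` has probability at most
`(e^{3/8} / 2)^n` by a Chernoff bound.
-/

open Finset Real

theorem Finset.sum_eq_sum_add_card_compl_mul {ι : Type*} [Fintype ι] [DecidableEq ι]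
    (s : Finset ι) {f : ι → ℝ} {c : ℝ} (hf : ∀ m ∉ s, f m = c) :
    ∑ m, f m = ∑ m ∈ s, f m + #sᶜ * c := by
  rw [← sum_add_sum_compl s, sum_congr rfl fun m hm => hf m (mem_compl.1 hm), sum_const,
    nsmul_eq_mul]

theorem abs_mul_mul_mul_le (x y z w : ℝ) :
    |x * y * z * w| ≤ (x ^ 4 + y ^ 4 + z ^ 4 + w ^ 4) / 4 := by
  have h := two_mul_le_add_sq |x * y| |z * w|
  rw [sq_abs, sq_abs] at h
  rw [show x * y * z * w = (x * y) * (z * w) by ring, abs_mul]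
  nlinarith [two_mul_le_add_sq (x ^ 2) (y ^ 2), two_mul_le_add_sq (z ^ 2) (w ^ 2)]

theorem sub_pow_four_le {a b : ℝ} (ha : 0 ≤ a) (hb : 0 ≤ b) : (a - b) ^ 4 ≤ a ^ 4 + b ^ 4 := by
  rcases le_total a b with h | h
  · nlinarith [pow_le_pow_left₀ (sub_nonneg.2 h) (sub_le_self b ha) 4, pow_nonneg ha 4]
  · nlinarith [pow_le_pow_left₀ (sub_nonneg.2 h) (sub_le_self a hb) 4, pow_nonneg hb 4]

namespace ProbabilityTheory

variable {Ω ι : Type*} [MeasurableSpace Ω] {μ : Measure Ω} {X : Ω → ι → ℝ}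

def IsExchangeable (X : Ω → ι → ℝ) (μ : Measure Ω) : Prop :=
  ∀ σ : Equiv.Perm ι, IdentDistrib (fun ω i => X ω (σ i)) X μ μ

theorem IsExchangeable.comp (hX : IsExchangeable X μ) {f : ℝ → ℝ} (hf : Measurable f) :
    IsExchangeable (fun ω i => f (X ω i)) μ :=
  fun σ => (hX σ).comp (u := fun (x : ι → ℝ) i => f (x i)) (by fun_prop)

theorem sum_integral_mul_eq_zero_of_ae_sum_eq_zero [Fintype ι]
    (hsum : ∀ᵐ ω ∂μ, ∑ m, X ω m = 0) {F : Ω → ℝ}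
    (hint : ∀ m, Integrable (fun ω => F ω * X ω m) μ) :
    ∑ m, ∫ ω, F ω * X ω m ∂μ = 0 := by
  rw [← integral_finsetSum _ fun m _ => hint m]
  refine integral_eq_zero_of_ae ?_
  filter_upwards [hsum] with ω h
  simp [← mul_sum, h]

theorem abs_integral_mul_mul_mul_le
    (hint : ∀ a b c d, Integrable (fun ω => X ω a * X ω b * X ω c * X ω d) μ) {q : ℝ}
    (hq : ∀ t, ∫ ω, X ω t ^ 4 ∂μ ≤ q) (a b c d : ι) :
    |∫ ω, X ω a * X ω b * X ω c * X ω d ∂μ| ≤ q := by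
  have hint₄ t : Integrable (fun ω => X ω t ^ 4) μ :=
    (hint t t t t).congr (ae_of_all _ fun ω => by ring)
  have := hint₄ a; have := hint₄ b; have := hint₄ c; have := hint₄ d
  calc |∫ ω, X ω a * X ω b * X ω c * X ω d ∂μ|
      ≤ ∫ ω, (X ω a ^ 4 + X ω b ^ 4 + X ω c ^ 4 + X ω d ^ 4) / 4 ∂μ := by
        rw [← Real.norm_eq_abs]
        exact norm_integral_le_of_norm_le (by fun_prop)
          (ae_of_all _ fun _ => abs_mul_mul_mul_le ..)
    _ = (∫ ω, X ω a ^ 4 ∂μ + ∫ ω, X ω b ^ 4 ∂μ + ∫ ω, X ω c ^ 4 ∂μ + ∫ ω, X ω d ^ 4 ∂μ) / 4 := by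
        rw [integral_div, integral_add, integral_add, integral_add] <;> fun_prop
    _ ≤ q := by linarith [hq a, hq b, hq c, hq d]

variable [DecidableEq ι]

theorem IsExchangeable.integral_mul_eval_eq_of_notMem (hX : IsExchangeable X μ) {a b c m m' : ι}
    (hm : m ∉ ({a, b, c} : Finset ι)) (hm' : m' ∉ ({a, b, c} : Finset ι)) :
    ∫ ω, X ω a * X ω b * X ω c * X ω m ∂μ = ∫ ω, X ω a * X ω b * X ω c * X ω m' ∂μ := by
  simp only [mem_insert, mem_singleton, not_or] at hm hm'
  have h := ((hX (Equiv.swap m m')).comp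
    (u := fun x : ι → ℝ => x a * x b * x c * x m') (by fun_prop)).integral_eq
  simp only [Function.comp_def, Equiv.swap_apply_right] at h
  rwa [Equiv.swap_apply_of_ne_of_ne (Ne.symm hm.1) (Ne.symm hm'.1),
    Equiv.swap_apply_of_ne_of_ne (Ne.symm hm.2.1) (Ne.symm hm'.2.1),
    Equiv.swap_apply_of_ne_of_ne (Ne.symm hm.2.2) (Ne.symm hm'.2.2)] at h

theorem IsExchangeable.sum_integral_add_card_mul_eq_zero [Fintype ι] (hX : IsExchangeable X μ)
    (hsum : ∀ᵐ ω ∂μ, ∑ m, X ω m = 0)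
    (hint : ∀ a b c d, Integrable (fun ω => X ω a * X ω b * X ω c * X ω d) μ) {a b c m₀ : ι}
    (hm₀ : m₀ ∉ ({a, b, c} : Finset ι)) :
    ∑ m ∈ {a, b, c}, ∫ ω, X ω a * X ω b * X ω c * X ω m ∂μ
      + #({a, b, c} : Finset ι)ᶜ * ∫ ω, X ω a * X ω b * X ω c * X ω m₀ ∂μ = 0 := by
  rw [← sum_eq_sum_add_card_compl_mul _ fun m hm => hX.integral_mul_eval_eq_of_notMem hm hm₀]
  exact sum_integral_mul_eq_zero_of_ae_sum_eq_zero hsum (hint a b c)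

theorem IsExchangeable.abs_integral_sq_mul_mul_le [Fintype ι] (hX : IsExchangeable X μ)
    (hsum : ∀ᵐ ω ∂μ, ∑ m, X ω m = 0)
    (hint : ∀ a b c d, Integrable (fun ω => X ω a * X ω b * X ω c * X ω d) μ) {q : ℝ}
    (hq : ∀ t, ∫ ω, X ω t ^ 4 ∂μ ≤ q) {a b c : ι} (hab : a ≠ b) (hac : a ≠ c) (hbc : b ≠ c) :
    (Fintype.card ι - 2 : ℝ) * |∫ ω, X ω a * X ω a * X ω b * X ω c ∂μ| ≤ 2 * q := by
  have hrel := hX.sum_integral_add_card_mul_eq_zero hsum hint (a := a) (b := a) (c := b)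
    (m₀ := c) (by simp [hac.symm, hbc.symm])
  have hcard : (#({a, b} : Finset ι)ᶜ : ℝ) = Fintype.card ι - 2 := by
    rw [card_compl, Nat.cast_sub (card_le_univ _), card_pair hab]
    norm_num
  rw [insert_idem, sum_pair hab, hcard] at hrel
  have hpos : (0 : ℝ) ≤ Fintype.card ι - 2 := hcard ▸ Nat.cast_nonneg _
  set C := ∫ ω, X ω a * X ω a * X ω b * X ω c ∂μ
  set D := ∫ ω, X ω a * X ω a * X ω b * X ω a ∂μ
  set E := ∫ ω, X ω a * X ω a * X ω b * X ω b ∂μ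
  calc (Fintype.card ι - 2 : ℝ) * |C| = |D + E| := by
        rw [← abs_of_nonneg hpos, ← abs_mul, ← abs_neg, neg_eq_of_add_eq_zero_left hrel]
    _ ≤ |D| + |E| := abs_add_le D E
    _ ≤ 2 * q := by
        linarith [abs_integral_mul_mul_mul_le hint hq a a b a,
          abs_integral_mul_mul_mul_le hint hq a a b b]

theorem IsExchangeable.abs_integral_mul_mul_mul_le_of_ne [Fintype ι] (hX : IsExchangeable X μ)
    (hsum : ∀ᵐ ω ∂μ, ∑ m, X ω m = 0)
    (hint : ∀ a b c d, Integrable (fun ω => X ω a * X ω b * X ω c * X ω d) μ) {q : ℝ}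
    (hq : ∀ t, ∫ ω, X ω t ^ 4 ∂μ ≤ q) {a b c d : ι} (hab : a ≠ b) (hac : a ≠ c) (had : a ≠ d)
    (hbc : b ≠ c) (hbd : b ≠ d) (hcd : c ≠ d) :
    (Fintype.card ι - 2 : ℝ) * (Fintype.card ι - 3) * |∫ ω, X ω a * X ω b * X ω c * X ω d ∂μ|
      ≤ 6 * q := by
  have hrel := hX.sum_integral_add_card_mul_eq_zero hsum hint (a := a) (b := b) (c := c)
    (m₀ := d) (by simp [had.symm, hbd.symm, hcd.symm])
  have hcard : (#({a, b, c} : Finset ι)ᶜ : ℝ) = Fintype.card ι - 3 := by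
    rw [card_compl, Nat.cast_sub (card_le_univ _), card_insert_of_notMem (by simp [hab, hac]),
      card_pair hbc]
    norm_num
  rw [sum_insert (by simp [hab, hac]), sum_pair hbc, hcard] at hrel
  have hpos : (0 : ℝ) ≤ Fintype.card ι - 3 := hcard ▸ Nat.cast_nonneg _
  have hBa := hX.abs_integral_sq_mul_mul_le hsum hint hq hab hac hbc
  have hBb := hX.abs_integral_sq_mul_mul_le hsum hint hq hab.symm hbc hac
  have hBc := hX.abs_integral_sq_mul_mul_le hsum hint hq hac.symm hbc.symm hab
  have ha : ∫ ω, X ω a * X ω a * X ω b * X ω c ∂μ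
      = ∫ ω, X ω a * X ω b * X ω c * X ω a ∂μ := integral_congr_ae (ae_of_all _ fun ω => by ring)
  have hb : ∫ ω, X ω b * X ω b * X ω a * X ω c ∂μ
      = ∫ ω, X ω a * X ω b * X ω c * X ω b ∂μ := integral_congr_ae (ae_of_all _ fun ω => by ring)
  have hc : ∫ ω, X ω c * X ω c * X ω a * X ω b ∂μ
      = ∫ ω, X ω a * X ω b * X ω c * X ω c ∂μ := integral_congr_ae (ae_of_all _ fun ω => by ring)
  rw [ha] at hBa; rw [hb] at hBb; rw [hc] at hBc
  set A := ∫ ω, X ω a * X ω b * X ω c * X ω d ∂μ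
  set Ca := ∫ ω, X ω a * X ω b * X ω c * X ω a ∂μ
  set Cb := ∫ ω, X ω a * X ω b * X ω c * X ω b ∂μ
  set Cc := ∫ ω, X ω a * X ω b * X ω c * X ω c ∂μ
  have h3 : (Fintype.card ι - 3 : ℝ) * |A| ≤ |Ca| + |Cb| + |Cc| := by
    rw [← abs_of_nonneg hpos, ← abs_mul, ← abs_neg, neg_eq_of_add_eq_zero_left hrel]
    linarith [abs_add_le Ca (Cb + Cc), abs_add_le Cb Cc]
  nlinarith

end ProbabilityTheory

theorem integral_exp_neg_mul_sq_gaussianReal {u : ℝ} (hu : 0 < 1 + 2 * u) :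
    ∫ x, exp (-(u * x ^ 2)) ∂gaussianReal 0 1 = (√(1 + 2 * u))⁻¹ := by
  have hpdf (x : ℝ) : gaussianPDFReal 0 1 x * exp (-(u * x ^ 2))
      = (√(2 * π))⁻¹ * exp (-((1 + 2 * u) / 2) * x ^ 2) := by
    rw [gaussianPDFReal, mul_assoc, ← exp_add]
    simp only [NNReal.coe_one, sub_zero, mul_one]
    ring_nf
  simp_rw [integral_gaussianReal_eq_integral_smul one_ne_zero, smul_eq_mul, hpdf,
    integral_const_mul, integral_gaussian]
  have : 0 < √(1 + 2 * u) := sqrt_pos.2 hu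
  rw [div_div_eq_mul_div, sqrt_div' _ hu.le, mul_comm π 2]
  field_simp

theorem integrable_pow_gaussianReal (m : ℝ) (v : NNReal) (k : ℕ) :
    Integrable (fun x => x ^ k) (gaussianReal m v) :=
  (memLp_id_gaussianReal k).integrable_norm_pow'.mono' (by fun_prop)
    (ae_of_all _ fun x => by simp [norm_pow])

instance isProbabilityMeasure_stdGaussian (n : ℕ) : IsProbabilityMeasure (stdGaussian n) := by
  rw [_root_.stdGaussian]; infer_instance

theorem mgf_sum_sq_stdGaussian (n : ℕ) {u : ℝ} (hu : 0 < 1 + 2 * u) :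
    mgf (fun g => ∑ i, g i ^ 2) (stdGaussian n) (-u) = (√(1 + 2 * u))⁻¹ ^ n := by
  have hprod (g : Fin n → ℝ) : exp (-u * ∑ i, g i ^ 2) = ∏ i, exp (-(u * g i ^ 2)) := by
    rw [mul_sum, ← exp_sum]; simp only [neg_mul]
  simp_rw [mgf, hprod]
  rw [_root_.stdGaussian, integral_fintype_prod_eq_pow (fun x => exp (-(u * x ^ 2))),
    integral_exp_neg_mul_sq_gaussianReal hu, Fintype.card_fin]

theorem stdGaussian_real_sum_sq_le (n : ℕ) :
    (stdGaussian n).real {g | ∑ i, g i ^ 2 ≤ n / 4} ≤ (exp (3 / 8) / 2) ^ n := by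
  have hint : Integrable (fun g : Fin n → ℝ => exp (-(3 / 2) * ∑ i, g i ^ 2))
      (stdGaussian n) := by
    refine .of_bound (Measurable.aestronglyMeasurable (by fun_prop)) 1
      (ae_of_all _ fun g => ?_)
    rw [norm_of_nonneg (exp_nonneg _), exp_le_one_iff]
    have : 0 ≤ ∑ i, g i ^ 2 := by positivity
    linarith
  -- Chernoff at `t = -3/2`: `exp (3/2 · n/4) · E[exp (-3/2 |g|²)] = exp (3/8)ⁿ · 2⁻ⁿ`
  have h := measure_le_le_exp_mul_mgf (n / 4 : ℝ) (by norm_num) hint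
  rw [mgf_sum_sq_stdGaussian n (by norm_num)] at h
  convert h using 1
  rw [show (1 + 2 * (3 / 2) : ℝ) = 2 ^ 2 by norm_num, sqrt_sq zero_le_two, div_eq_mul_inv,
    mul_pow, ← exp_nat_mul]
  ring_nf

variable {n : ℕ}

noncomputable def sphereProj (g : Fin n → ℝ) : Fin n → ℝ := fun i => g i / √(∑ j, g j ^ 2)

theorem sphereUniform_eq_map (n : ℕ) : sphereUniform n = (stdGaussian n).map sphereProj := rfl

@[fun_prop]
theorem measurable_sphereProj : Measurable (sphereProj (n := n)) := by
  unfold sphereProj; fun_prop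

theorem sphereProj_comp_perm (σ : Equiv.Perm (Fin n)) (g : Fin n → ℝ) :
    sphereProj (fun i => g (σ i)) = fun i => sphereProj g (σ i) := by
  funext i
  simp only [sphereProj]
  rw [Equiv.sum_comp σ fun j => g j ^ 2]

theorem sq_le_sum_sq (g : Fin n → ℝ) (i : Fin n) : g i ^ 2 ≤ ∑ j, g j ^ 2 :=
  single_le_sum (fun j _ => sq_nonneg (g j)) (mem_univ i)

theorem sum_sq_sphereProj {g : Fin n → ℝ} (hg : g ≠ 0) : ∑ i, sphereProj g i ^ 2 = 1 := by
  have hpos : 0 < ∑ j, g j ^ 2 := by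
    obtain ⟨i, hi⟩ := Function.ne_iff.1 hg
    exact (pow_two_pos_of_ne_zero hi).trans_le (sq_le_sum_sq g i)
  simp only [sphereProj, div_pow, sq_sqrt hpos.le, ← sum_div, div_self hpos.ne']

theorem abs_sphereProj_le_one (g : Fin n → ℝ) (i : Fin n) : |sphereProj g i| ≤ 1 := by
  rw [sphereProj, abs_div, abs_of_nonneg (sqrt_nonneg _), ← sqrt_sq_eq_abs]
  exact div_le_one_of_le₀ (sqrt_le_sqrt (sq_le_sum_sq g i)) (sqrt_nonneg _)

theorem isExchangeable_stdGaussian (n : ℕ) : IsExchangeable id (stdGaussian n) := fun σ =>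
  { aemeasurable_fst := (measurable_pi_lambda _ fun i => measurable_pi_apply _).aemeasurable
    aemeasurable_snd := aemeasurable_id
    map_eq := by
      rw [Measure.map_id]
      exact ((measurePreserving_piCongrLeft (fun _ => gaussianReal 0 1) σ).symm _).map_eq }

theorem isExchangeable_sphereUniform (n : ℕ) : IsExchangeable id (sphereUniform n) := fun σ =>
  { aemeasurable_fst := (measurable_pi_lambda _ fun i => measurable_pi_apply _).aemeasurable
    aemeasurable_snd := aemeasurable_id
    map_eq := by
      rw [Measure.map_id, sphereUniform_eq_map, Measure.map_map (by fun_prop) (by fun_prop)]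
      have hcomm : (fun (y : Fin n → ℝ) i => y (σ i)) ∘ sphereProj
          = sphereProj ∘ fun g i => g (σ i) :=
        funext fun g => (sphereProj_comp_perm σ g).symm
      change Measure.map ((fun y i => y (σ i)) ∘ sphereProj) _ = _
      rw [hcomm]
      exact ((isExchangeable_stdGaussian n σ).comp measurable_sphereProj).map_eq }

theorem ae_sum_sq_sphereUniform (hn : n ≠ 0) : ∀ᵐ y ∂sphereUniform n, ∑ i, y i ^ 2 = 1 := by
  have : NullSingletonClass (gaussianReal 0 1) := nullSingletonClass_gaussianReal one_ne_zero
  have : Nonempty (Fin n) := ⟨⟨0, Nat.pos_of_ne_zero hn⟩⟩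
  have : NullSingletonClass (stdGaussian n) := by rw [_root_.stdGaussian]; infer_instance
  rw [sphereUniform_eq_map,
    ae_map_iff (by fun_prop) (measurableSet_eq_fun (by fun_prop) (by fun_prop))]
  filter_upwards [Measure.ae_ne (stdGaussian n) 0] with g hg using sum_sq_sphereProj hg

theorem ae_sum_sq_sub_eq_zero_sphereUniform (hn : n ≠ 0) :
    ∀ᵐ y ∂sphereUniform n, ∑ i, (y i ^ 2 - 1 / (n : ℝ)) = 0 := by
  filter_upwards [ae_sum_sq_sphereUniform hn] with y hy
  rw [sum_sub_distrib, hy, sum_const, card_univ, Fintype.card_fin, nsmul_eq_mul,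
    mul_one_div_cancel (Nat.cast_ne_zero.2 hn), sub_self]

theorem integrable_comp_sphereProj {f : (Fin n → ℝ) → ℝ} (hf : Continuous f) :
    Integrable (fun g => f (sphereProj g)) (stdGaussian n) := by
  obtain ⟨C, hC⟩ := (isCompact_closedBall (0 : Fin n → ℝ) 1).exists_bound_of_continuousOn
    hf.continuousOn
  refine .of_bound (hf.measurable.comp measurable_sphereProj).aestronglyMeasurable C
    (ae_of_all _ fun g => hC _ ?_)
  rw [mem_closedBall_zero_iff, pi_norm_le_iff_of_nonneg zero_le_one]
  exact fun i => abs_sphereProj_le_one g i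

theorem integrable_sphereUniform {f : (Fin n → ℝ) → ℝ} (hf : Continuous f) :
    Integrable f (sphereUniform n) := by
  rw [sphereUniform_eq_map, integrable_map_measure hf.aestronglyMeasurable (by fun_prop)]
  exact integrable_comp_sphereProj hf

theorem pow_mul_sphereProj_pow_le (g : Fin n → ℝ) (i : Fin n) {r : ℝ} (hr : 0 ≤ r) :
    r ^ 4 * sphereProj g i ^ 8
      ≤ g i ^ 8 + r ^ 4 * {g : Fin n → ℝ | ∑ j, g j ^ 2 ≤ r}.indicator 1 g := by
  by_cases hS : ∑ j, g j ^ 2 ≤ r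
  · have : sphereProj g i ^ 8 ≤ 1 := by
      rw [show 8 = 2 * 4 by rfl, pow_mul, ← sq_abs]
      exact pow_le_one₀ (by positivity) (pow_le_one₀ (abs_nonneg _) (abs_sphereProj_le_one g i))
    rw [Set.indicator_of_mem (show g ∈ {g : Fin n → ℝ | ∑ j, g j ^ 2 ≤ r} from hS),
      Pi.one_apply]
    nlinarith [pow_nonneg hr 4, Even.pow_nonneg (n := 8) ⟨4, rfl⟩ (g i)]
  · rw [not_le] at hS
    have hpos : 0 < ∑ j, g j ^ 2 := hr.trans_lt hS
    rw [Set.indicator_of_notMem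
      (show g ∉ {g : Fin n → ℝ | ∑ j, g j ^ 2 ≤ r} from hS.not_ge), mul_zero, add_zero,
      sphereProj, div_pow, show (8 : ℕ) = 2 * 4 by rfl, pow_mul, pow_mul, sq_sqrt hpos.le,
      mul_div_assoc']
    exact div_le_of_le_mul₀ (by positivity) (by positivity) (by rw [mul_comm]; gcongr)

theorem integral_pow_eight_sphereUniform_le (n : ℕ) (i : Fin n) :
    (n / 4 : ℝ) ^ 4 * ∫ y, y i ^ 8 ∂sphereUniform n
      ≤ ∫ x, x ^ 8 ∂gaussianReal 0 1 + (n / 4 : ℝ) ^ 4 * (exp (3 / 8) / 2) ^ n := by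
  have hev := measurePreserving_eval (fun _ : Fin n => gaussianReal 0 1) i
  have hmoment : ∫ g, g i ^ 8 ∂stdGaussian n = ∫ x, x ^ 8 ∂gaussianReal 0 1 := by
    rw [← hev.map_eq, integral_map hev.measurable.aemeasurable (by fun_prop)]
    rfl
  have hS : MeasurableSet {g : Fin n → ℝ | ∑ j, g j ^ 2 ≤ n / 4} :=
    measurableSet_le (by fun_prop) measurable_const
  have hint₁ : Integrable (fun g : Fin n → ℝ => g i ^ 8) (stdGaussian n) :=
    hev.integrable_comp_of_integrable (integrable_pow_gaussianReal 0 1 8)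
  have hint₂ : Integrable ({g : Fin n → ℝ | ∑ j, g j ^ 2 ≤ n / 4}.indicator 1)
      (stdGaussian n) := (integrable_const (1 : ℝ)).indicator hS
  rw [sphereUniform_eq_map,
    integral_map (by fun_prop) (Measurable.aestronglyMeasurable (by fun_prop)),
    ← integral_const_mul]
  calc ∫ g, (n / 4 : ℝ) ^ 4 * sphereProj g i ^ 8 ∂stdGaussian n
      ≤ ∫ g, (g i ^ 8 + (n / 4 : ℝ) ^ 4 * {g : Fin n → ℝ | ∑ j, g j ^ 2 ≤ n / 4}.indicator 1 g)
          ∂stdGaussian n := by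
        refine integral_mono
          (integrable_comp_sphereProj (f := fun y => (n / 4 : ℝ) ^ 4 * y i ^ 8) (by fun_prop))
          (hint₁.add (hint₂.const_mul _)) fun g => pow_mul_sphereProj_pow_le g i (by positivity)
    _ ≤ _ := by
        rw [integral_add, integral_const_mul, integral_indicator_one hS, hmoment]
        · gcongr
          exact stdGaussian_real_sum_sq_le n
        · exact hint₁
        · exact hint₂.const_mul _

instance isProbabilityMeasure_sphereUniform (n : ℕ) : IsProbabilityMeasure (sphereUniform n) :=
  Measure.isProbabilityMeasure_map (by fun_prop)

theorem exists_integral_pow_eight_sphereUniform_le :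
    ∃ C, ∀ (n : ℕ) (i : Fin n), ∫ y, y i ^ 8 ∂sphereUniform n ≤ C / (n : ℝ) ^ 4 := by
  have hr : |exp (3 / 8) / 2| < 1 := by
    rw [abs_of_pos (by positivity), div_lt_one two_pos, ← exp_log two_pos, exp_lt_exp]
    linarith [log_two_gt_d9]
  obtain ⟨K, hK⟩ := (tendsto_pow_const_mul_const_pow_of_abs_lt_one 4 hr).bddAbove_range
  refine ⟨256 * ∫ x, x ^ 8 ∂gaussianReal 0 1 + K, fun n i => ?_⟩
  have hn : (0 : ℝ) < n := Nat.cast_pos.2 i.pos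
  have h := integral_pow_eight_sphereUniform_le n i
  have hKn : (n : ℝ) ^ 4 * (exp (3 / 8) / 2) ^ n ≤ K := hK ⟨n, rfl⟩
  rw [le_div_iff₀ (by positivity)]
  rw [div_pow] at h
  nlinarith

theorem exists_integral_sq_sub_pow_four_sphereUniform_le :
    ∃ C, ∀ (n : ℕ) (i : Fin n),
      ∫ y, (y i ^ 2 - 1 / (n : ℝ)) ^ 4 ∂sphereUniform n ≤ C / (n : ℝ) ^ 4 := by
  obtain ⟨C, hC⟩ := exists_integral_pow_eight_sphereUniform_le
  refine ⟨C + 1, fun n i => ?_⟩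
  calc ∫ y, (y i ^ 2 - 1 / n) ^ 4 ∂sphereUniform n
      ≤ ∫ y, (y i ^ 8 + 1 / n ^ 4) ∂sphereUniform n := by
        refine integral_mono (integrable_sphereUniform (by fun_prop))
          (integrable_sphereUniform (by fun_prop)) fun y => ?_
        simpa [← pow_mul, div_pow] using
          sub_pow_four_le (sq_nonneg (y i)) (by positivity : (0 : ℝ) ≤ 1 / n)
    _ = ∫ y, y i ^ 8 ∂sphereUniform n + 1 / n ^ 4 := by
        rw [integral_add (integrable_sphereUniform (by fun_prop)) (integrable_const _),
          integral_const, probReal_univ, one_smul]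
    _ ≤ (C + 1) / n ^ 4 := by
        rw [add_div]
        exact add_le_add_left (hC n i) _

/-- for `y` uniform on `S^{n-1}`, `n ≥ 4`, and mutually distinct `i j k l`,
`|E[(y_i² - 1/n)(y_j² - 1/n)(y_k² - 1/n)(y_l² - 1/n)]| ≤ C n^{-6}`. -/
theorem statement2 :
    ∃ C : ℝ, 0 < C ∧ ∀ (n : ℕ), 4 ≤ n → ∀ i j k l : Fin n,
      i ≠ j → i ≠ k → i ≠ l → j ≠ k → j ≠ l → k ≠ l →
      |∫ y, (y i ^ 2 - 1 / n) * (y j ^ 2 - 1 / n) * (y k ^ 2 - 1 / n) * (y l ^ 2 - 1 / n)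
          ∂(sphereUniform n)| ≤ C / (n : ℝ) ^ 6 := by
  obtain ⟨C, hC⟩ := exists_integral_sq_sub_pow_four_sphereUniform_le
  refine ⟨48 * max C 1, by positivity, fun n hn i j k l hij hik hil hjk hjl hkl => ?_⟩
  have hX : IsExchangeable (fun y t => y t ^ 2 - 1 / (n : ℝ)) (sphereUniform n) :=
    (isExchangeable_sphereUniform n).comp (f := fun x => x ^ 2 - 1 / (n : ℝ)) (by fun_prop)
  have hq t : ∫ y, (y t ^ 2 - 1 / (n : ℝ)) ^ 4 ∂sphereUniform n ≤ max C 1 / (n : ℝ) ^ 4 :=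
    (hC n t).trans (by gcongr; exact le_max_left _ _)
  have key := hX.abs_integral_mul_mul_mul_le_of_ne (ae_sum_sq_sub_eq_zero_sphereUniform (by omega))
    (fun a b c d => integrable_sphereUniform (by fun_prop)) hq hij hik hil hjk hjl hkl
  rw [Fintype.card_fin, ← mul_div_assoc, le_div_iff₀ (by positivity)] at key
  have hsq : (n : ℝ) ^ 2 ≤ 8 * ((n - 2) * (n - 3)) := by
    nlinarith [(show (4 : ℝ) ≤ n by exact_mod_cast hn)]
  rw [le_div_iff₀ (by positivity)]
  set A := |∫ y, (y i ^ 2 - 1 / (n : ℝ)) * (y j ^ 2 - 1 / (n : ℝ)) * (y k ^ 2 - 1 / (n : ℝ))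
    * (y l ^ 2 - 1 / (n : ℝ)) ∂sphereUniform n|
  calc A * n ^ 6 = n ^ 2 * (A * n ^ 4) := by ring
    _ ≤ 8 * ((n - 2) * (n - 3)) * (A * n ^ 4) := by gcongr
    _ ≤ 48 * max C 1 := by linarith
end

section
/- Let F_sc be the cumulative distribution function of the semicircle law, F_sc(s) = ∫_{-2}^{s} (1/(2π)) sqrt(4-x^2) dx for s ∈ [-2,2]. Then there exist positive constants C and C' such that for all -2 ≤ s_1 ≤ s_2 ≤ 2, setting t_j = F_sc(s_j), one has C (t_2 - t_1) ≤ s_2 - s_1 ≤ C' (t_2 - t_1)^{2/3}. -/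
/-!
On `[-2, 2]` the semicircle density `√(4 - x²) / (2π)` is at most `1/π`, which gives the
lower bound with `C = π`. For the upper bound, if `[s₁, s₂] ⊆ [-2, 2]` has length `d`, then on
its middle third both `2 - x` and `2 + x` are at least `d / 3`, so the density there is at least
`√d / (4π)`; hence `t₂ - t₁ ≥ d^{3/2} / (12π)`, i.e. `d ≤ (12π)^{2/3} (t₂ - t₁)^{2/3}`.
-/

open Real

/-- The cumulative distribution function of the semicircle law on `[-2,2]`. -/
noncomputable def Fsc (s : ℝ) : ℝ :=
  ∫ x in (-2 : ℝ)..s, Real.sqrt (4 - x ^ 2) / (2 * π)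

noncomputable def scDensity (x : ℝ) : ℝ := √(4 - x ^ 2) / (2 * π)

lemma continuous_scDensity : Continuous scDensity := by
  unfold scDensity
  fun_prop

lemma intervalIntegrable_scDensity (a b : ℝ) :
    IntervalIntegrable scDensity MeasureTheory.volume a b :=
  continuous_scDensity.intervalIntegrable a b

lemma scDensity_nonneg (x : ℝ) : 0 ≤ scDensity x := by
  unfold scDensity
  positivity

lemma scDensity_le (x : ℝ) : scDensity x ≤ 1 / π := by
  have hsqrt : √(4 - x ^ 2) ≤ 2 := Real.sqrt_le_iff.2 ⟨by norm_num, by nlinarith [sq_nonneg x]⟩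
  rw [scDensity, div_le_div_iff₀ (by positivity) pi_pos]
  nlinarith [pi_pos]

lemma sqrt_div_le_scDensity {e x : ℝ} (he : 0 ≤ e) (he₂ : e ≤ 2)
    (hx₁ : -2 + e ≤ x) (hx₂ : x ≤ 2 - e) : √(2 * e) / (2 * π) ≤ scDensity x := by
  have hsq : 2 * e ≤ 4 - x ^ 2 := by
    nlinarith [mul_nonneg (by linarith : 0 ≤ 2 - x - e) (by linarith : 0 ≤ 2 + x - e)]
  unfold scDensity
  gcongr

lemma Fsc_sub_Fsc (s₁ s₂ : ℝ) : Fsc s₂ - Fsc s₁ = ∫ x in s₁..s₂, scDensity x := by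
  rw [sub_eq_iff_eq_add']
  exact (intervalIntegral.integral_add_adjacent_intervals
    (intervalIntegrable_scDensity (-2) s₁) (intervalIntegrable_scDensity s₁ s₂)).symm

lemma Fsc_sub_Fsc_le {s₁ s₂ : ℝ} (h : s₁ ≤ s₂) : Fsc s₂ - Fsc s₁ ≤ (s₂ - s₁) / π := by
  calc Fsc s₂ - Fsc s₁ ≤ ∫ _ in s₁..s₂, 1 / π := by
        rw [Fsc_sub_Fsc]
        exact intervalIntegral.integral_mono_on h (intervalIntegrable_scDensity s₁ s₂)
          intervalIntegrable_const fun x _ ↦ scDensity_le x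
    _ = (s₂ - s₁) / π := by simp [div_eq_mul_inv]

lemma mul_sqrt_le_Fsc_sub_Fsc {s₁ s₂ : ℝ} (h₁ : -2 ≤ s₁) (h₁₂ : s₁ ≤ s₂) (h₂ : s₂ ≤ 2) :
    (s₂ - s₁) * √(s₂ - s₁) / (12 * π) ≤ Fsc s₂ - Fsc s₁ := by
  set d := s₂ - s₁ with hd
  have hd₀ : 0 ≤ d := by linarith
  have hmiddle : ∫ _ in (s₁ + d / 3)..(s₂ - d / 3), √(2 * (d / 3)) / (2 * π)
      ≤ ∫ x in (s₁ + d / 3)..(s₂ - d / 3), scDensity x :=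
    intervalIntegral.integral_mono_on (by linarith) intervalIntegrable_const
      (intervalIntegrable_scDensity _ _) fun x hx ↦
        sqrt_div_le_scDensity (by linarith) (by linarith) (by linarith [hx.1]) (by linarith [hx.2])
  have hwhole : ∫ x in (s₁ + d / 3)..(s₂ - d / 3), scDensity x ≤ ∫ x in s₁..s₂, scDensity x :=
    intervalIntegral.integral_mono_interval (by linarith) (by linarith) (by linarith)
      (.of_forall scDensity_nonneg) (intervalIntegrable_scDensity s₁ s₂)
  have hsqrt : √d / 2 ≤ √(2 * (d / 3)) := by
    rw [show √d / 2 = √(d / 4) by rw [Real.sqrt_div' _ (by norm_num : (0 : ℝ) ≤ 4)]; norm_num]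
    gcongr
    linarith
  rw [intervalIntegral.integral_const, smul_eq_mul] at hmiddle
  rw [Fsc_sub_Fsc]
  calc d * √d / (12 * π) = d / 3 * (√d / 2 / (2 * π)) := by field_simp; ring
    _ ≤ (s₂ - d / 3 - (s₁ + d / 3)) * (√(2 * (d / 3)) / (2 * π)) := by
        rw [show s₂ - d / 3 - (s₁ + d / 3) = d / 3 by rw [hd]; ring]
        gcongr
    _ ≤ _ := hmiddle.trans hwhole

lemma le_mul_rpow_two_thirds {d K t : ℝ} (hd : 0 ≤ d) (hK : 0 < K) (h : d * √d ≤ K * t) :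
    d ≤ K ^ ((2 : ℝ) / 3) * t ^ ((2 : ℝ) / 3) := by
  have ht : 0 ≤ t := nonneg_of_mul_nonneg_right ((by positivity : 0 ≤ d * √d).trans h) hK
  have hpow : d * √d = d ^ ((3 : ℝ) / 2) := by
    rw [Real.sqrt_eq_rpow, show (3 : ℝ) / 2 = 1 + 1 / 2 by norm_num,
      Real.rpow_add' hd (by norm_num), Real.rpow_one]
  calc d = (d ^ ((3 : ℝ) / 2)) ^ ((2 : ℝ) / 3) := by
        rw [← Real.rpow_mul hd]; norm_num
    _ ≤ (K * t) ^ ((2 : ℝ) / 3) := by rw [← hpow]; gcongr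
    _ = K ^ ((2 : ℝ) / 3) * t ^ ((2 : ℝ) / 3) := Real.mul_rpow hK.le ht

/-- there are `C, C' > 0` such that for all `-2 ≤ s₁ ≤ s₂ ≤ 2`, with
`t_j = F_sc(s_j)`, one has `C (t₂ - t₁) ≤ s₂ - s₁ ≤ C' (t₂ - t₁)^{2/3}`. -/
theorem statement7 :
    ∃ C C' : ℝ, 0 < C ∧ 0 < C' ∧ ∀ s₁ s₂ : ℝ, -2 ≤ s₁ → s₁ ≤ s₂ → s₂ ≤ 2 →
      C * (Fsc s₂ - Fsc s₁) ≤ s₂ - s₁ ∧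
      s₂ - s₁ ≤ C' * (Fsc s₂ - Fsc s₁) ^ ((2 : ℝ) / 3) := by
  refine ⟨π, (12 * π) ^ ((2 : ℝ) / 3), pi_pos, by positivity, fun s₁ s₂ h₁ h₁₂ h₂ ↦ ⟨?_, ?_⟩⟩
  · have := Fsc_sub_Fsc_le h₁₂
    rwa [le_div_iff₀' pi_pos] at this
  · have := mul_sqrt_le_Fsc_sub_Fsc h₁ h₁₂ h₂
    rw [div_le_iff₀' (by positivity)] at this
    exact le_mul_rpow_two_thirds (by linarith) (by positivity) this
end
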